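/- arXiv:1705.08667 — 5 statements merged into one kernel-verified Lean document; each statement's English description precedes it below -/
import Mathlib

section
/- If G is a triangle-free graph of order n and size m with no isolated vertex, then the open packing number of G satisfies ρ_o(G) ≤ n + 1 − sqrt(4m − 2n + 1). -/
open SimpleGraph

def SimpleGraph.IsOpenPacking {V : Type*} (G : SimpleGraph V) (B : Finset V) : Prop :=
  ∀ v u w, u ∈ B → w ∈ B → G.Adj v u → G.Adj v w → u = w

def SimpleGraph.IsPacking {V : Type*} (G : SimpleGraph V) (B : Finset V) : Prop :=
  ∀ u ∈ B, ∀ w ∈ B, u ≠ w →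
    Disjoint (insert u (G.neighborSet u)) (insert w (G.neighborSet w))

noncomputable def SimpleGraph.openPackingNumber {V : Type*} [Fintype V] (G : SimpleGraph V) : ℕ :=
  sSup {k | ∃ B : Finset V, G.IsOpenPacking B ∧ B.card = k}

noncomputable def SimpleGraph.packingNumber {V : Type*} [Fintype V] (G : SimpleGraph V) : ℕ :=
  sSup {k | ∃ B : Finset V, G.IsPacking B ∧ B.card = k}

/-!
Let `B` be a maximum open packing and `S = Bᶜ`, with `s = |S|`. Every vertex has at most one
neighbour in `B`, so counting the ends of edges by the side they lie on gives
`2m ≤ n + s + 2 e(S)`, and Mantel's theorem bounds `4 e(S) ≤ s²`. Hence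
`4m - 2n + 1 ≤ (s + 1)² = (n - ρ_o + 1)²`.
-/

open Finset

namespace SimpleGraph

variable {V : Type*} {G : SimpleGraph V}

theorem exists_isOpenPacking_card_eq_openPackingNumber [Fintype V] :
    ∃ B : Finset V, G.IsOpenPacking B ∧ #B = G.openPackingNumber :=
  Nat.sSup_mem (s := {k | ∃ B : Finset V, G.IsOpenPacking B ∧ B.card = k})
    ⟨0, ∅, fun _ _ _ hu => by simp at hu, rfl⟩
    ⟨Fintype.card V, by rintro _ ⟨B, -, rfl⟩; exact card_le_univ B⟩

theorem IsOpenPacking.card_adj_le_one [DecidableRel G.Adj] {B : Finset V}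
    (hB : G.IsOpenPacking B) (v : V) : #{u ∈ B | G.Adj v u} ≤ 1 :=
  card_le_one.2 fun u hu w hw => by
    simp only [mem_filter] at hu hw
    exact hB v u w hu.1 hw.1 hu.2 hw.2

variable [Fintype V] [DecidableRel G.Adj]

theorem CliqueFree.four_mul_card_edgeFinset_le_sq (h : G.CliqueFree 3) :
    4 * #G.edgeFinset ≤ Fintype.card V ^ 2 := by
  have hturan : #G.edgeFinset ≤
      (Fintype.card V ^ 2 - (Fintype.card V % 2) ^ 2) * (2 - 1) / (2 * 2)
        + (Fintype.card V % 2).choose 2 :=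
    h.card_edgeFinset_le
  rw [Nat.choose_eq_zero_of_lt (Nat.mod_lt _ two_pos)] at hturan
  have := Nat.div_mul_le_self (Fintype.card V ^ 2 - (Fintype.card V % 2) ^ 2) (2 * 2)
  omega

theorem degree_induce_finset [DecidableEq V] (S : Finset V) (v : S) :
    (G.induce (S : Set V)).degree v = #{u ∈ S | G.Adj v u} := by
  have := congrArg card (map_neighborFinset_induce (G := G) (s := (S : Set V)) v)
  rw [card_map, card_neighborFinset_eq_degree] at this
  -- `convert` also reconciles the two `Fintype` instances on `↥(S : Set V)`.
  convert this using 2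
  ext
  simp [and_comm]

theorem CliqueFree.two_mul_sum_card_adj_le_sq [DecidableEq V] (h : G.CliqueFree 3)
    (S : Finset V) : 2 * ∑ v ∈ S, #{u ∈ S | G.Adj v u} ≤ #S ^ 2 := by
  have hmantel :=
    (h.comap (Embedding.induce (S : Set V)).toCopy.isContained).four_mul_card_edgeFinset_le_sq
  have hsum := sum_degrees_eq_twice_card_edges (G.induce (S : Set V))
  simp only [degree_induce_finset] at hsum
  simp only [SetLike.coe_sort_coe, univ_eq_attach,
    sum_attach S (fun v => #{u ∈ S | G.Adj v u})] at hsum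
  simp only [SetLike.coe_sort_coe, Fintype.card_coe] at hmantel
  omega

theorem degree_eq_card_adj_add_card_adj_compl [DecidableEq V] (B : Finset V) (v : V) :
    G.degree v = #{u ∈ B | G.Adj v u} + #{u ∈ Bᶜ | G.Adj v u} := by
  rw [← card_neighborFinset_eq_degree, neighborFinset_eq_filter, card_filter, card_filter,
    card_filter, sum_add_sum_compl]

theorem sum_card_adj_eq_sum_degree (S : Finset V) :
    ∑ v, #{u ∈ S | G.Adj v u} = ∑ u ∈ S, G.degree u := by
  simpa [bipartiteAbove, bipartiteBelow, ← card_neighborFinset_eq_degree,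
    neighborFinset_eq_filter, adj_comm]
    using sum_card_bipartiteAbove_eq_sum_card_bipartiteBelow (s := univ) (t := S) G.Adj

theorem IsOpenPacking.two_mul_card_edgeFinset_le [DecidableEq V] {B : Finset V}
    (hB : G.IsOpenPacking B) :
    2 * #G.edgeFinset ≤ Fintype.card V + #Bᶜ + ∑ v ∈ Bᶜ, #{u ∈ Bᶜ | G.Adj v u} := by
  have hsum_le (X : Finset V) : ∑ v ∈ X, #{u ∈ B | G.Adj v u} ≤ #X := by
    simpa using sum_le_sum fun v (_ : v ∈ X) => hB.card_adj_le_one v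
  calc 2 * #G.edgeFinset = ∑ v, G.degree v := (sum_degrees_eq_twice_card_edges G).symm
    _ = ∑ v, #{u ∈ B | G.Adj v u} + ∑ u ∈ Bᶜ, G.degree u := by
      simp only [degree_eq_card_adj_add_card_adj_compl B, sum_add_distrib,
        sum_card_adj_eq_sum_degree]
    _ = ∑ v, #{u ∈ B | G.Adj v u} + ∑ v ∈ Bᶜ, #{u ∈ B | G.Adj v u}
          + ∑ v ∈ Bᶜ, #{u ∈ Bᶜ | G.Adj v u} := by
      simp only [degree_eq_card_adj_add_card_adj_compl B, sum_add_distrib, add_assoc]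
    _ ≤ Fintype.card V + #Bᶜ + ∑ v ∈ Bᶜ, #{u ∈ Bᶜ | G.Adj v u} := by
      gcongr
      · exact (hsum_le univ).trans_eq card_univ
      · exact hsum_le Bᶜ

end SimpleGraph

theorem stmt_1_general {V : Type*} [Fintype V] (G : SimpleGraph V) [DecidableRel G.Adj]
    (h : G.CliqueFree 3) :
    (G.openPackingNumber : ℝ) ≤ Fintype.card V + 1 -
      Real.sqrt (4 * G.edgeFinset.card - 2 * Fintype.card V + 1) := by
  classical
  obtain ⟨B, hB, hcard⟩ := G.exists_isOpenPacking_card_eq_openPackingNumber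
  have hedges := hB.two_mul_card_edgeFinset_le
  have hmantel := h.two_mul_sum_card_adj_le_sq Bᶜ
  have hsplit : (#B : ℝ) + #Bᶜ = Fintype.card V := by exact_mod_cast card_add_card_compl B
  have hsq : (4 * #G.edgeFinset - 2 * Fintype.card V + 1 : ℝ) ≤ (#Bᶜ + 1) ^ 2 := by
    have : 4 * #G.edgeFinset ≤ 2 * Fintype.card V + 2 * #Bᶜ + #Bᶜ ^ 2 := by omega
    have : (4 * #G.edgeFinset : ℝ) ≤ 2 * Fintype.card V + 2 * #Bᶜ + #Bᶜ ^ 2 := by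
      exact_mod_cast this
    linarith
  have hsqrt := Real.sqrt_le_sqrt hsq
  rw [Real.sqrt_sq (by positivity)] at hsqrt
  rw [← hcard]
  linarith

theorem stmt_1 {V : Type*} [Fintype V] (G : SimpleGraph V) [DecidableRel G.Adj]
    (h : G.CliqueFree 3) (hiso : ∀ v, 0 < G.degree v) :
    (G.openPackingNumber : ℝ) ≤ Fintype.card V + 1 -
      Real.sqrt (4 * G.edgeFinset.card - 2 * Fintype.card V + 1) :=
  stmt_1_general G h
end

section
/- For any connected graph G, the 2-limited packing number satisfies L_2(G) ≥ ⌈(2·diam(G) + 2)/3⌉. -/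
/-!
Take a diametral geodesic `v₀ v₁ … v_d` and keep the vertices `vᵢ` with `i % 3 ≠ 2`. Along a
geodesic, vertices of a closed neighbourhood have indices at most two apart, and every window of
three consecutive indices contains exactly one index `≡ 2 (mod 3)`; so each closed neighbourhood
meets the chosen set in at most two vertices. The set has `(d + 1) - (d + 1) / 3 = ⌈(2d + 2) / 3⌉`
elements.
-/

open SimpleGraph

def SimpleGraph.IsTwoLimitedPacking {V : Type*} [DecidableEq V] [Fintype V]
    (G : SimpleGraph V) [DecidableRel G.Adj] (B : Finset V) : Prop :=
  ∀ v : V, ((insert v (G.neighborFinset v)) ∩ B).card ≤ 2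

noncomputable def SimpleGraph.twoLimitedPackingNumber {V : Type*} [DecidableEq V]
    [Fintype V] (G : SimpleGraph V) [DecidableRel G.Adj] : ℕ :=
  sSup {k | ∃ B : Finset V, G.IsTwoLimitedPacking B ∧ B.card = k}

open Finset

lemma Finset.card_filter_range_mod_three_ne_two (n : ℕ) :
    ((range n).filter (fun i => i % 3 ≠ 2)).card = n - n / 3 := by
  induction n with
  | zero => simp
  | succ m ih =>
    rw [range_add_one, filter_insert]
    split_ifs with h
    · rw [card_insert_of_notMem (by simp), ih]
      omega
    · rw [ih]
      omega

lemma Finset.card_le_two_of_mod_three_ne_two {T : Finset ℕ} (hmod : ∀ i ∈ T, i % 3 ≠ 2)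
    (hclose : ∀ i ∈ T, ∀ j ∈ T, i ≤ j + 2) : T.card ≤ 2 := by
  by_contra! hT
  obtain ⟨a, ha, b, hb, c, hc, hab, hac, hbc⟩ := two_lt_card.mp hT
  have := hclose a ha b hb; have := hclose b hb a ha
  have := hclose a ha c hc; have := hclose c hc a ha
  have := hclose b hb c hc; have := hclose c hc b hb
  have := hmod a ha; have := hmod b hb; have := hmod c hc
  omega

namespace SimpleGraph

variable {V : Type*} {G : SimpleGraph V}

namespace Walk

variable {u v : V} (p : G.Walk u v)

lemma dist_getVert_getVert_add_le (i k : ℕ) :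
    G.dist (p.getVert i) (p.getVert (i + k)) ≤ k := by
  have h := dist_le ((p.drop i).take k)
  rw [take_length, drop_getVert] at h
  omega

variable {p}

lemma dist_getVert_getVert_of_length_eq_dist (hp : p.length = G.dist u v) {i j : ℕ}
    (hij : i ≤ j) (hj : j ≤ p.length) : G.dist (p.getVert i) (p.getVert j) = j - i := by
  have hj' : i + (j - i) = j := by omega
  have hle := p.dist_getVert_getVert_add_le i (j - i)
  have hstart := p.dist_getVert_getVert_add_le 0 i
  have hend := p.dist_getVert_getVert_add_le j (p.length - j)
  rw [hj'] at hle
  rw [getVert_zero, zero_add] at hstart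
  rw [show j + (p.length - j) = p.length by omega, getVert_length] at hend
  have hu := (p.take i).reachable.dist_triangle_left v
  have hv := (p.drop j).reachable.dist_triangle_right (p.getVert i)
  omega

lemma getVert_injOn_of_length_eq_dist (hp : p.length = G.dist u v) :
    Set.InjOn p.getVert {i | i ≤ p.length} := by
  suffices h : ∀ i j, i ≤ j → j ≤ p.length → p.getVert i = p.getVert j → i = j by
    intro i hi j hj hij
    rcases le_total i j with hle | hle
    · exact h i j hle hj hij
    · exact (h j i hle hi hij.symm).symm
  intro i j hij hj heq
  have := dist_getVert_getVert_of_length_eq_dist hp hij hj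
  rw [heq, dist_self] at this
  omega

end Walk

variable [DecidableEq V] [Fintype V] [DecidableRel G.Adj]

lemma reachable_and_dist_le_one_of_mem_insert_neighborFinset {w x : V}
    (hx : x ∈ insert w (G.neighborFinset w)) : G.Reachable w x ∧ G.dist w x ≤ 1 := by
  rcases mem_insert.mp hx with rfl | hadj
  · exact ⟨Reachable.refl x, by simp⟩
  · rw [mem_neighborFinset] at hadj
    exact ⟨hadj.reachable, dist_le hadj.toWalk⟩

lemma dist_le_two_of_mem_insert_neighborFinset {w x y : V}
    (hx : x ∈ insert w (G.neighborFinset w)) (hy : y ∈ insert w (G.neighborFinset w)) :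
    G.dist x y ≤ 2 := by
  obtain ⟨hwx, hx⟩ := reachable_and_dist_le_one_of_mem_insert_neighborFinset hx
  obtain ⟨-, hy⟩ := reachable_and_dist_le_one_of_mem_insert_neighborFinset hy
  have := hwx.symm.dist_triangle_left y
  rw [dist_comm] at hx
  omega

lemma IsTwoLimitedPacking.card_le_twoLimitedPackingNumber {B : Finset V}
    (hB : G.IsTwoLimitedPacking B) : B.card ≤ G.twoLimitedPackingNumber := by
  refine le_csSup ⟨Fintype.card V, ?_⟩ ⟨B, hB, rfl⟩
  rintro k ⟨B', -, rfl⟩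
  exact card_le_univ B'

lemma isTwoLimitedPacking_image_getVert_filter_mod_three {u v : V} {p : G.Walk u v}
    (hp : p.length = G.dist u v) :
    G.IsTwoLimitedPacking
      (((range (p.length + 1)).filter (fun i => i % 3 ≠ 2)).image p.getVert) := by
  intro w
  set S := (range (p.length + 1)).filter (fun i => i % 3 ≠ 2)
  set N := insert w (G.neighborFinset w)
  have hS : ∀ i ∈ S, i ≤ p.length ∧ i % 3 ≠ 2 := fun i hi => by
    simpa [S, Nat.lt_succ_iff] using hi
  rw [inter_comm, ← filter_mem_eq_inter, filter_image]
  refine card_image_le.trans (card_le_two_of_mod_three_ne_two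
    (fun i hi => (hS i (mem_filter.mp hi).1).2) ?_)
  intro i hi j hj
  rw [mem_filter] at hi hj
  have hdist := dist_le_two_of_mem_insert_neighborFinset hi.2 hj.2
  rcases le_total i j with hij | hji
  · rw [Walk.dist_getVert_getVert_of_length_eq_dist hp hij (hS j hj.1).1] at hdist
    omega
  · rw [dist_comm, Walk.dist_getVert_getVert_of_length_eq_dist hp hji (hS i hi.1).1] at hdist
    omega

end SimpleGraph

theorem stmt_7_general {V : Type*} [DecidableEq V] [Fintype V]
    (G : SimpleGraph V) [DecidableRel G.Adj] (hc : G.Connected) :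
    (2 * G.diam + 2 + 2) / 3 ≤ G.twoLimitedPackingNumber := by
  have := hc.nonempty
  obtain ⟨u, v, huv⟩ := G.exists_dist_eq_diam
  obtain ⟨p, hp⟩ := hc.exists_walk_length_eq_dist u v
  have hlen : p.length = G.diam := hp.trans huv
  have hinj :
      Set.InjOn p.getVert ((range (p.length + 1)).filter (fun i => i % 3 ≠ 2) : Set ℕ) :=
    (Walk.getVert_injOn_of_length_eq_dist hp).mono fun i hi => by
      simpa [Nat.lt_succ_iff] using (mem_filter.mp hi).1
  calc (2 * G.diam + 2 + 2) / 3 ≤ (p.length + 1) - (p.length + 1) / 3 := by omega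
    _ = _ := by rw [card_image_of_injOn hinj, card_filter_range_mod_three_ne_two]
    _ ≤ _ :=
      (isTwoLimitedPacking_image_getVert_filter_mod_three hp).card_le_twoLimitedPackingNumber

theorem stmt_7 {V : Type*} [DecidableEq V] [Fintype V] [Nonempty V]
    (G : SimpleGraph V) [DecidableRel G.Adj] (hc : G.Connected) :
    (2 * G.diam + 2 + 2) / 3 ≤ G.twoLimitedPackingNumber :=
  stmt_7_general G hc
end

section
/- If G and its complement are both connected and diam(G) = diam(complement of G) = 3, then ρ(G) = ρ(complement of G) = 2, and hence ρ(G) + ρ(complement of G) = 4 and ρ(G)·ρ(complement of G) = 4. -/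
/-!
If `dist u v ≥ 3` then the closed neighbourhoods of `u` and `v` are disjoint, so `{u, v}` is a
packing and `ρ(G) ≥ 2` whenever `diam G ≥ 3`. Conversely, a vertex lies in the closed
neighbourhood of at most one member of a packing, so given a packing with three members and any
two vertices `x, y`, some member `z` is adjacent to neither in `G`; then `x - z - y` is a walk in
`Ḡ`, and `diam Ḡ ≤ 2`. Hence `diam G, diam Ḡ ≥ 3` forces `ρ(G) = 2`, and symmetrically `ρ(Ḡ) = 2`.
-/

open SimpleGraph

namespace SimpleGraph

variable {V : Type*} {G : SimpleGraph V}

lemma edist_le_one_of_mem_insert_neighborSet {u x : V} (hx : x ∈ insert u (G.neighborSet u)) :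
    G.edist u x ≤ 1 :=
  edist_le_one_iff_adj_or_eq.mpr (hx.elim (fun h => Or.inr h.symm) Or.inl)

lemma isPacking_pair_of_two_lt_dist [DecidableEq V] {u v : V} (h : 2 < G.dist u v) :
    G.IsPacking {u, v} := by
  have hdisj : Disjoint (insert u (G.neighborSet u)) (insert v (G.neighborSet v)) := by
    refine Set.disjoint_left.mpr fun x hu hv => h.not_ge (ENat.toNat_le_of_le_natCast ?_)
    calc G.edist u v ≤ G.edist u x + G.edist x v := G.edist_triangle
      _ ≤ 1 + 1 := by
        rw [edist_comm (u := x)]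
        exact add_le_add (edist_le_one_of_mem_insert_neighborSet hu)
          (edist_le_one_of_mem_insert_neighborSet hv)
      _ = 2 := by norm_num
  intro a ha b hb hab
  simp only [Finset.mem_insert, Finset.mem_singleton] at ha hb
  rcases ha with rfl | rfl <;> rcases hb with rfl | rfl
  exacts [absurd rfl hab, hdisj, hdisj.symm, absurd rfl hab]

lemma IsPacking.eq_of_mem_insert_neighborSet {B : Finset V} (hB : G.IsPacking B) {a b x : V}
    (ha : a ∈ B) (hb : b ∈ B) (hxa : x ∈ insert a (G.neighborSet a))
    (hxb : x ∈ insert b (G.neighborSet b)) : a = b :=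
  by_contra fun hab => Set.disjoint_left.mp (hB a ha b hb hab) hxa hxb

lemma IsPacking.exists_mem_notMem_insert_neighborSet {B : Finset V} (hB : G.IsPacking B)
    (hB3 : 2 < B.card) (x y : V) :
    ∃ z ∈ B, x ∉ insert z (G.neighborSet z) ∧ y ∉ insert z (G.neighborSet z) := by
  classical
  let hits (w : V) := B.filter fun z => w ∈ insert z (G.neighborSet z)
  have hits_card (w : V) : (hits w).card ≤ 1 := Finset.card_le_one.mpr fun a ha b hb => by
    simp only [hits, Finset.mem_filter] at ha hb
    exact hB.eq_of_mem_insert_neighborSet ha.1 hb.1 ha.2 hb.2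
  obtain ⟨z, hz, hzxy⟩ := Finset.exists_mem_notMem_of_card_lt_card (s := hits x ∪ hits y) <|
    calc (hits x ∪ hits y).card ≤ (hits x).card + (hits y).card := Finset.card_union_le _ _
      _ ≤ 1 + 1 := add_le_add (hits_card x) (hits_card y)
      _ < B.card := hB3
  simp only [hits, Finset.mem_union, Finset.mem_filter, not_or, not_and] at hzxy
  exact ⟨z, hz, hzxy.1 hz, hzxy.2 hz⟩

lemma IsPacking.compl_ediam_le_two {B : Finset V} (hB : G.IsPacking B) (hB3 : 2 < B.card) :
    Gᶜ.ediam ≤ 2 := by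
  refine ediam_le_of_edist_le fun x y => ?_
  obtain ⟨z, -, hxz, hyz⟩ := hB.exists_mem_notMem_insert_neighborSet hB3 x y
  simp only [Set.mem_insert_iff, mem_neighborSet, not_or] at hxz hyz
  have hx : Gᶜ.Adj x z := (compl_adj G x z).mpr ⟨hxz.1, fun h => hxz.2 h.symm⟩
  have hy : Gᶜ.Adj z y := (compl_adj G z y).mpr ⟨Ne.symm hyz.1, hyz.2⟩
  calc Gᶜ.edist x y ≤ (hx.toWalk.append hy.toWalk).length := edist_le _
    _ = 2 := by simp

lemma IsPacking.card_le_two_of_two_lt_diam_compl {B : Finset V} (hB : G.IsPacking B)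
    (h : 2 < Gᶜ.diam) : B.card ≤ 2 := by
  by_contra! hB3
  exact h.not_ge (ENat.toNat_le_of_le_natCast (hB.compl_ediam_le_two hB3))

lemma packingNumber_eq_two_of_two_lt_diam [Fintype V] (hd : 2 < G.diam) (hd' : 2 < Gᶜ.diam) :
    G.packingNumber = 2 := by
  classical
  have : Nonempty V := (nontrivial_of_diam_ne_zero (G := G) (by omega)).to_nonempty
  obtain ⟨u, v, huv⟩ := G.exists_dist_eq_diam
  have hne : u ≠ v := by
    rintro rfl
    rw [dist_self] at huv
    omega
  refine IsGreatest.csSup_eq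
    ⟨⟨{u, v}, isPacking_pair_of_two_lt_dist (by omega), Finset.card_pair hne⟩, ?_⟩
  rintro _ ⟨B, hB, rfl⟩
  exact hB.card_le_two_of_two_lt_diam_compl hd'

end SimpleGraph

theorem stmt_9_general {V : Type*} [Fintype V] (G : SimpleGraph V)
    (hd : G.diam = 3) (hd' : Gᶜ.diam = 3) :
    G.packingNumber = 2 ∧ Gᶜ.packingNumber = 2 ∧
      G.packingNumber + Gᶜ.packingNumber = 4 ∧
      G.packingNumber * Gᶜ.packingNumber = 4 := by
  have hG : G.packingNumber = 2 := packingNumber_eq_two_of_two_lt_diam (by omega) (by omega)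
  have hGc : Gᶜ.packingNumber = 2 :=
    packingNumber_eq_two_of_two_lt_diam (by omega) (by rw [compl_compl]; omega)
  simp only [hG, hGc, true_and]

theorem stmt_9 {V : Type*} [Fintype V] (G : SimpleGraph V)
    (hc : G.Connected) (hc' : Gᶜ.Connected)
    (hd : G.diam = 3) (hd' : Gᶜ.diam = 3) :
    G.packingNumber = 2 ∧ Gᶜ.packingNumber = 2 ∧
      G.packingNumber + Gᶜ.packingNumber = 4 ∧
      G.packingNumber * Gᶜ.packingNumber = 4 :=
  stmt_9_general G hd hd'
end

section
/- If G and its complement are both connected and u, v are the endpoints of a path of length 3 realizing diam(G) = 3, then {u, v} is a dominating set in the complement of G. -/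
open SimpleGraph

lemma SimpleGraph.dist_le_two_of_adj_of_adj {V : Type*} {G : SimpleGraph V} {u w v : V}
    (huw : G.Adj u w) (hwv : G.Adj w v) : G.dist u v ≤ 2 :=
  dist_le (huw.toWalk.append hwv.toWalk)

theorem stmt_10_general {V : Type*} (G : SimpleGraph V)
    (u v : V) (hdist : G.dist u v = 3) :
    ∀ w : V, w ≠ u → w ≠ v → Gᶜ.Adj w u ∨ Gᶜ.Adj w v := by
  intro w hwu hwv
  by_contra! h
  have huw : G.Adj u w := by simpa [compl_adj, hwu, G.adj_comm] using h.1
  have hwv : G.Adj w v := by simpa [compl_adj, hwv] using h.2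
  have := dist_le_two_of_adj_of_adj huw hwv
  omega

theorem stmt_10 {V : Type*} [Fintype V] (G : SimpleGraph V)
    (hc : G.Connected) (hc' : Gᶜ.Connected)
    (hdiam : G.diam = 3) (u v : V) (hdist : G.dist u v = 3) :
    ∀ w : V, w ≠ u → w ≠ v → Gᶜ.Adj w u ∨ Gᶜ.Adj w v :=
  stmt_10_general G u v hdist
end

section
/- Let G and Ḡ both be connected with diam(G) ≥ 3 and diam(Ḡ) ≤ 2. Then ρ(G) ≤ n − ⌈(2·diam(G) + 3·Δ(G) − 8)/3⌉, where n is the order of G and Δ(G) its maximum degree. -/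
open SimpleGraph

/-!
Let `x₀, …, x_d` be a shortest path between two vertices at distance `d = diam G`, and `N` the
closed neighbourhood of a vertex `v` of maximum degree `Δ`. A 2-packing `B` meets `N` at most once
and meets the path only in vertices at least three steps apart; since the path is geodesic, `N`
meets it in at most three consecutive vertices. Outside such a window of three consecutive
indices the path holds at most `(d + 2) / 3` vertices of `B`, so at most `(d + 11) / 3` path
vertices lie in `B ∪ N`. The remaining path vertices together with `N \ B` are at least
`(d + 1) + (Δ + 1) - (d + 14) / 3` vertices outside `B`, i.e. `3 (n - |B|) ≥ 2d + 3Δ - 8`.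
-/

open Finset

theorem three_mul_card_le_of_pairwise {A : Finset ℕ} {lo hi : ℕ} (hA : A ⊆ Ico lo hi)
    (hgap : (A : Set ℕ).Pairwise fun a b => a + 3 ≤ b ∨ b + 3 ≤ a) :
    3 * #A ≤ hi - lo + 2 := by
  have hcard : #A ≤ #(range ((hi - lo + 2) / 3)) := by
    refine card_le_card_of_injOn (fun a => (a - lo) / 3) (fun a ha => ?_) fun a ha b hb hab => ?_
    · have := mem_Ico.1 (hA ha)
      simp only [coe_range, Set.mem_Iio]
      omega
    · have := mem_Ico.1 (hA ha)
      have := mem_Ico.1 (hA hb)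
      by_contra hne
      have := hgap ha hb hne
      simp only at hab
      omega
  rw [card_range] at hcard
  omega

theorem three_mul_card_sdiff_Ico_le {A : Finset ℕ} {d m : ℕ} (hA : A ⊆ range (d + 1))
    (hgap : (A : Set ℕ).Pairwise fun a b => a + 3 ≤ b ∨ b + 3 ≤ a) (hm : m + 2 ≤ d) :
    3 * #(A \ Ico m (m + 3)) ≤ d + 2 := by
  have hsplit : A \ Ico m (m + 3) = A.filter (· < m) ∪ A.filter (m + 3 ≤ ·) := by
    ext a
    simp only [mem_sdiff, mem_Ico, mem_union, mem_filter, ← and_or_left]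
    exact and_congr_right fun _ => by omega
  have hlow : 3 * #(A.filter (· < m)) ≤ m + 2 := by
    simpa using three_mul_card_le_of_pairwise (lo := 0) (fun a ha => by simp_all [mem_filter])
      (hgap.mono (coe_subset.2 (filter_subset _ _)))
  have hhigh : 3 * #(A.filter (m + 3 ≤ ·)) ≤ d + 1 - (m + 3) + 2 :=
    three_mul_card_le_of_pairwise
      (fun a ha => by have := hA (mem_filter.1 ha).1; simp_all [mem_filter])
      (hgap.mono (coe_subset.2 (filter_subset _ _)))
  have := card_union_le (A.filter (· < m)) (A.filter (m + 3 ≤ ·))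
  rw [hsplit]
  omega

theorem exists_Ico_superset_of_le_add_two {C : Finset ℕ} {d : ℕ} (hd : 2 ≤ d)
    (hC : C ⊆ range (d + 1)) (hspread : ∀ j ∈ C, ∀ k ∈ C, k ≤ j + 2) :
    ∃ m, m + 2 ≤ d ∧ C ⊆ Ico m (m + 3) := by
  rcases C.eq_empty_or_nonempty with rfl | hne
  · exact ⟨0, by omega, empty_subset _⟩
  refine ⟨min (C.min' hne) (d - 2), by omega, fun k hk => ?_⟩
  have := C.min'_le k hk
  have := hspread _ (C.min'_mem hne) k hk
  have := mem_range.1 (hC hk)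
  rw [mem_Ico]
  omega

theorem three_mul_card_union_le {A C : Finset ℕ} {d : ℕ} (hd : 2 ≤ d) (hA : A ⊆ range (d + 1))
    (hgap : (A : Set ℕ).Pairwise fun a b => a + 3 ≤ b ∨ b + 3 ≤ a) (hC : C ⊆ range (d + 1))
    (hspread : ∀ j ∈ C, ∀ k ∈ C, k ≤ j + 2) :
    3 * #(A ∪ C) ≤ d + 11 := by
  obtain ⟨m, hm, hCm⟩ := exists_Ico_superset_of_le_add_two hd hC hspread
  calc 3 * #(A ∪ C) ≤ 3 * #(A \ Ico m (m + 3) ∪ Ico m (m + 3)) := by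
        rw [sdiff_union_self_eq_union]
        gcongr
    _ ≤ 3 * (#(A \ Ico m (m + 3)) + 3) := by
        gcongr
        simpa using card_union_le (A \ Ico m (m + 3)) (Ico m (m + 3))
    _ ≤ d + 11 := by
        have := three_mul_card_sdiff_Ico_le hA hgap hm
        omega

namespace SimpleGraph

variable {V : Type*} {G : SimpleGraph V}

variable (G) in
theorem exists_isPacking_card_eq_packingNumber [Fintype V] :
    ∃ B : Finset V, G.IsPacking B ∧ #B = G.packingNumber :=
  Nat.sSup_mem (s := {k | ∃ B : Finset V, G.IsPacking B ∧ #B = k})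
    ⟨0, ∅, fun _ h => absurd h (notMem_empty _), rfl⟩
    ⟨Fintype.card V, by rintro k ⟨B, -, rfl⟩; exact card_le_univ B⟩

theorem Walk.dist_getVert_getVert {u v : V} {p : G.Walk u v} (hp : p.length = G.dist u v)
    {i j : ℕ} (hij : i ≤ j) (hj : j ≤ p.length) :
    G.dist (p.getVert i) (p.getVert j) = j - i := by
  have hsub : ((p.take j).drop i).IsSubwalk p := (isSubwalk_drop _ i).trans (p.isSubwalk_take j)
  have := length_eq_dist_of_subwalk hp hsub
  rw [drop_length, take_length, take_getVert, min_eq_right hij, min_eq_left hj] at this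
  exact this.symm

theorem IsPacking.eq_of_reachable_of_dist_le_two {B : Finset V} (hB : G.IsPacking B) {u w : V}
    (hu : u ∈ B) (hw : w ∈ B) (hr : G.Reachable u w) (hdist : G.dist u w ≤ 2) : u = w := by
  by_contra hne
  obtain ⟨p, hp⟩ := hr.exists_walk_length_eq_dist
  have hpos : 0 < p.length := hp ▸ hr.pos_dist_of_ne hne
  have h1 : G.Adj u (p.getVert 1) := by simpa using p.adj_getVert_succ hpos
  refine Set.disjoint_left.1 (hB u hu w hw hne) (Set.mem_insert_of_mem _ h1) ?_
  rcases (show p.length = 1 ∨ p.length = 2 by omega) with h | h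
  · rw [← h, p.getVert_length]
    exact Set.mem_insert _ _
  · have h2 := p.adj_getVert_succ (i := 1) (by omega)
    rw [show 1 + 1 = p.length by omega, p.getVert_length] at h2
    exact Set.mem_insert_of_mem _ h2.symm

variable [DecidableEq V]

theorem IsPacking.pairwise_getVert_mem {B : Finset V} (hB : G.IsPacking B) {u w : V}
    {p : G.Walk u w} (hp : p.length = G.dist u w) :
    ((range (p.length + 1)).filter (p.getVert · ∈ B) : Set ℕ).Pairwise
      fun a b => a + 3 ≤ b ∨ b + 3 ≤ a := by
  intro i hi j hj hne
  wlog hlt : i < j generalizing i j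
  · exact (this hj hi hne.symm (by omega)).symm
  simp only [coe_filter, mem_range, Set.mem_ofPred_eq] at hi hj
  have hdist := p.dist_getVert_getVert hp hlt.le (by omega)
  by_contra! hclose
  have heq := hB.eq_of_reachable_of_dist_le_two hi.2 hj.2
    (Reachable.of_dist_ne_zero (by omega)) (by omega)
  rw [heq, dist_self] at hdist
  omega

section closedNeighborFinset

variable (G) (v : V) [Fintype (G.neighborSet v)]

def closedNeighborFinset : Finset V := insert v (G.neighborFinset v)

variable {G v}

theorem mem_closedNeighborFinset {w : V} :
    w ∈ G.closedNeighborFinset v ↔ w = v ∨ G.Adj v w := by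
  simp [closedNeighborFinset]

theorem card_closedNeighborFinset : #(G.closedNeighborFinset v) = G.degree v + 1 := by
  rw [closedNeighborFinset, card_insert_of_notMem (G.notMem_neighborFinset_self v),
    card_neighborFinset_eq_degree]

theorem dist_le_one_of_mem_closedNeighborFinset {w : V} (hw : w ∈ G.closedNeighborFinset v) :
    G.dist v w ≤ 1 := by
  rcases mem_closedNeighborFinset.1 hw with rfl | hadj
  · simp
  · exact (dist_eq_one_iff_adj.2 hadj).le

theorem IsPacking.card_closedNeighborFinset_inter_le_one {B : Finset V} (hB : G.IsPacking B) :
    #(G.closedNeighborFinset v ∩ B) ≤ 1 := by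
  have hv : ∀ y ∈ G.closedNeighborFinset v, v ∈ insert y (G.neighborSet y) := fun y hy => by
    rcases mem_closedNeighborFinset.1 hy with rfl | hadj
    · exact Set.mem_insert _ _
    · exact Set.mem_insert_of_mem _ hadj.symm
  refine card_le_one.2 fun a ha b hb => by_contra fun hab => ?_
  rw [mem_inter] at ha hb
  exact Set.disjoint_left.1 (hB a ha.2 b hb.2 hab) (hv a ha.1) (hv b hb.1)

theorem Walk.le_add_two_of_getVert_mem_closedNeighborFinset (hc : G.Connected) {u w : V}
    {p : G.Walk u w} (hp : p.length = G.dist u w) :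
    ∀ j ∈ (range (p.length + 1)).filter (p.getVert · ∈ G.closedNeighborFinset v),
    ∀ k ∈ (range (p.length + 1)).filter (p.getVert · ∈ G.closedNeighborFinset v), k ≤ j + 2 := by
  intro j hj k hk
  simp only [mem_filter, mem_range] at hj hk
  rcases le_or_gt k j with hkj | hjk
  · omega
  have hdist := p.dist_getVert_getVert hp hjk.le (by omega)
  have hj' := dist_le_one_of_mem_closedNeighborFinset hj.2
  have hk' := dist_le_one_of_mem_closedNeighborFinset hk.2
  have := hc.dist_triangle (u := p.getVert j) (v := v) (w := p.getVert k)
  rw [dist_comm] at hj'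
  omega

end closedNeighborFinset

theorem IsPacking.two_mul_length_add_three_mul_degree_le [Fintype V] [DecidableRel G.Adj]
    (hc : G.Connected) {B : Finset V} (hB : G.IsPacking B) {u w : V} {p : G.Walk u w}
    (hp : p.length = G.dist u w) (hlen : 2 ≤ p.length) (v : V) :
    2 * p.length + 3 * G.degree v ≤ 3 * (Fintype.card V - #B) + 8 := by
  set N := G.closedNeighborFinset v
  set I := range (p.length + 1)
  set A := I.filter (p.getVert · ∈ B)
  set C := I.filter (p.getVert · ∈ N)
  set R := I.filter fun i => ¬(p.getVert i ∈ B ∨ p.getVert i ∈ N)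
  have hAC : 3 * #(A ∪ C) ≤ p.length + 11 :=
    three_mul_card_union_le hlen (filter_subset _ _) (hB.pairwise_getVert_mem hp)
      (filter_subset _ _) (p.le_add_two_of_getVert_mem_closedNeighborFinset hc hp)
  have hR : #R + #(A ∪ C) = p.length + 1 := by
    rw [← filter_or, add_comm, card_filter_add_card_filter_not, card_range]
  have hRimg : #(R.image p.getVert) = #R :=
    card_image_of_injOn <| (p.isPath_of_length_eq_dist hp).getVert_injOn.mono fun i hi => by
      simpa [R, I, Nat.lt_succ_iff] using (mem_filter.1 hi).1
  have hN : #(N ∩ B) + #(N \ B) = G.degree v + 1 := by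
    rw [card_inter_add_card_sdiff, card_closedNeighborFinset]
  have hdisj : Disjoint (R.image p.getVert) (N \ B) := by
    refine Finset.disjoint_left.2 fun y hy hyN => ?_
    obtain ⟨i, hi, rfl⟩ := mem_image.1 hy
    exact (mem_filter.1 hi).2 (Or.inr (mem_sdiff.1 hyN).1)
  have hsub : R.image p.getVert ∪ N \ B ⊆ Bᶜ := by
    refine union_subset (fun y hy => ?_) fun y hy => mem_compl.2 (mem_sdiff.1 hy).2
    obtain ⟨i, hi, rfl⟩ := mem_image.1 hy
    exact mem_compl.2 fun hB => (mem_filter.1 hi).2 (Or.inl hB)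
  have hcard := card_le_card hsub
  rw [card_union_of_disjoint hdisj, card_compl] at hcard
  have hNB : #(N ∩ B) ≤ 1 := hB.card_closedNeighborFinset_inter_le_one
  omega

end SimpleGraph

open scoped Classical in
theorem stmt_14_general {V : Type*} [Fintype V] (G : SimpleGraph V)
    (hc : G.Connected)
    (hd : 3 ≤ G.diam) :
    (G.packingNumber : ℤ) ≤ (Fintype.card V : ℤ) -
      ⌈((2 * G.diam + 3 * G.maxDegree - 8 : ℤ) : ℚ) / 3⌉ := by
  have : Nonempty V := hc.nonempty
  obtain ⟨B, hB, hcard⟩ := G.exists_isPacking_card_eq_packingNumber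
  obtain ⟨u, w, huw⟩ := G.exists_dist_eq_diam
  obtain ⟨p, hp⟩ := hc.exists_walk_length_eq_dist u w
  obtain ⟨v, hv⟩ := G.exists_maximal_degree_vertex
  have key := hB.two_mul_length_add_three_mul_degree_le hc hp (by omega) v
  rw [hp, huw, ← hv] at key
  have hBn : #B ≤ Fintype.card V := card_le_univ B
  rw [← hcard, le_sub_comm, Int.ceil_le, div_le_iff₀ (by norm_num)]
  push_cast
  have : ((2 * G.diam + 3 * G.maxDegree : ℕ) : ℚ) ≤ 3 * ((Fintype.card V - #B : ℕ) : ℚ) + 8 := by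
    exact_mod_cast key
  push_cast [hBn] at this
  linarith

open scoped Classical in
theorem stmt_14 {V : Type*} [Fintype V] (G : SimpleGraph V)
    (hc : G.Connected) (hc' : Gᶜ.Connected)
    (hd : 3 ≤ G.diam) (hd' : Gᶜ.diam ≤ 2) :
    (G.packingNumber : ℤ) ≤ (Fintype.card V : ℤ) -
      ⌈((2 * G.diam + 3 * G.maxDegree - 8 : ℤ) : ℚ) / 3⌉ :=
  stmt_14_general G hc hd
end
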